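/- Let P, Q, S be the probability distributions on {0,1} given by P = (1/8, 7/8), Q = (7/8, 1/8), S = (9/16, 7/16) (i.e., P(0) = 1−p, P(1) = p, Q(0) = 1−ε, Q(1) = ε, S(0) = 1−p/2, S(1) = p/2 with p = 7/8 and ε = 1/8). Then the strict inequality D(P‖Q) > D_max(P‖S) + D(S‖Q) holds. -/

import Mathlib

noncomputable section

namespace CIT

/-- A probability distribution on a finite set. -/
def IsDist {X : Type*} [Fintype X] (p : X → ℝ) : Prop :=
  (∀ x, 0 ≤ p x) ∧ ∑ x, p x = 1

/-- Support inclusion `supp p ⊆ supp q`. -/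
def suppLe {X : Type*} (p q : X → ℝ) : Prop := ∀ x, p x ≠ 0 → q x ≠ 0

open Classical in
/-- Relative entropy (base 2), with `0·log 0 = 0`, `+∞` if the support
condition fails. -/
def relEnt {X : Type*} [Fintype X] (p q : X → ℝ) : EReal :=
  if suppLe p q then ((∑ x, p x * Real.logb 2 (p x / q x) : ℝ) : EReal) else ⊤

open Classical in
/-- Max-relative entropy `D_max(p‖q) = log max_{x ∈ supp p} p(x)/q(x)`,
`+∞` if the support condition fails. -/
def dMax {X : Type*} [Fintype X] (p q : X → ℝ) : EReal :=
  if suppLe p q then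
    ((Real.logb 2 (sSup {r : ℝ | ∃ x, p x ≠ 0 ∧ r = p x / q x}) : ℝ) : EReal)
  else ⊤

open Classical in
/-- Rényi relative entropy of order `α` (base 2), with `D_1 := D` and `+∞`
when `α > 1` and the support condition fails. -/
def renyi {X : Type*} [Fintype X] (α : ℝ) (p q : X → ℝ) : EReal :=
  if α = 1 then relEnt p q
  else if 1 < α ∧ ¬ suppLe p q then ⊤
  else (((α - 1)⁻¹ * Real.logb 2 (∑ x, p x ^ α * q x ^ (1 - α)) : ℝ) : EReal)

/-- The `XY`-marginal of a tripartite distribution. -/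
def margXY {X Y Z : Type*} [Fintype Z] (P : X × Y × Z → ℝ) : X × Y → ℝ :=
  fun t => ∑ z, P (t.1, t.2, z)

/-- The `YZ`-marginal of a tripartite distribution. -/
def margYZ {X Y Z : Type*} [Fintype X] (P : X × Y × Z → ℝ) : Y × Z → ℝ :=
  fun t => ∑ x, P (x, t.1, t.2)

/-- The `Y`-marginal of a tripartite distribution. -/
def margY {X Y Z : Type*} [Fintype X] [Fintype Z] (P : X × Y × Z → ℝ) : Y → ℝ :=
  fun y => ∑ x, ∑ z, P (x, y, z)

/-- Conditional mutual information
`I(X:Z|Y)_P = Σ P(x,y,z) log( P(x,y,z)·P_Y(y) / (P_XY(x,y)·P_YZ(y,z)) )`. -/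
def cmi {X Y Z : Type*} [Fintype X] [Fintype Y] [Fintype Z] (P : X × Y × Z → ℝ) : ℝ :=
  ∑ s : X × Y × Z,
    P s * Real.logb 2 (P s * margY P s.2.1 / (margXY P (s.1, s.2.1) * margYZ P (s.2.1, s.2.2)))

/-- A classical channel from `Y` to `W`: a family of conditional distributions. -/
def IsChannel {Y W : Type*} [Fintype W] (R : Y → W → ℝ) : Prop :=
  ∀ y, (∀ w, 0 ≤ R y w) ∧ ∑ w, R y w = 1

/-- Action `(id ⊗ R)` of a channel `R : Y → W` on a joint distribution on `X × Y`. -/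
def applyChan {X Y W : Type*} [Fintype Y] (R : Y → W → ℝ) (P : X × Y → ℝ) : X × W → ℝ :=
  fun t => ∑ y, P (t.1, y) * R y t.2

/-- Action of a channel `R : Y → W` on a distribution on `Y`. -/
def chanOnDist {Y W : Type*} [Fintype Y] (R : Y → W → ℝ) (q : Y → ℝ) : W → ℝ :=
  fun w => ∑ y, q y * R y w

/-- Marginal channel `R_{Y→Y}(y'|y) = Σ_{z'} R(y',z'|y)`. -/
def margChan {Y Y' Z' : Type*} [Fintype Z'] (R : Y → Y' × Z' → ℝ) : Y → Y' → ℝ :=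
  fun y y' => ∑ z', R y (y', z')

end CIT

/-!
All supports are full, so every quantity is finite: `D(P‖Q) = (3/4) log 7`,
`D_max(P‖S) = log 2 = 1` (the larger ratio `P/S` is `2`, at `1`) and
`D(S‖Q) = (9/8) log 3 - (1/8) log 7 - 1`. The inequality thus reduces to
`9 log 3 < 7 log 7`, i.e. `3 ^ 9 < 7 ^ 7`.
-/

open Real

namespace CIT

theorem suppLe_of_forall_ne_zero {X : Type*} {p q : X → ℝ} (hq : ∀ x, q x ≠ 0) : suppLe p q :=
  fun x _ => hq x

section

variable {X : Type*} [Fintype X] {p q : X → ℝ}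

theorem relEnt_of_suppLe (h : suppLe p q) :
    relEnt p q = ((∑ x, p x * logb 2 (p x / q x) : ℝ) : EReal) :=
  if_pos h

theorem dMax_of_isGreatest {m : ℝ} (h : suppLe p q)
    (hm : IsGreatest {r : ℝ | ∃ x, p x ≠ 0 ∧ r = p x / q x} m) :
    dMax p q = ((logb 2 m : ℝ) : EReal) := by
  rw [dMax, if_pos h, hm.csSup_eq]

end

theorem relEnt_fin_two {a b c d : ℝ} (hc : c ≠ 0) (hd : d ≠ 0) :
    relEnt ![a, b] ![c, d] = ((a * logb 2 (a / c) + b * logb 2 (b / d) : ℝ) : EReal) := by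
  rw [relEnt_of_suppLe (suppLe_of_forall_ne_zero fun x => by fin_cases x <;> assumption),
    Fin.sum_univ_two]
  rfl

theorem dMax_fin_two_of_div_le {a b c d : ℝ} (hb : b ≠ 0) (hc : c ≠ 0) (hd : d ≠ 0)
    (hratio : a / c ≤ b / d) :
    dMax ![a, b] ![c, d] = ((logb 2 (b / d) : ℝ) : EReal) := by
  refine dMax_of_isGreatest
    (suppLe_of_forall_ne_zero fun x => by fin_cases x <;> assumption) ⟨⟨1, hb, rfl⟩, ?_⟩
  rintro r ⟨x, -, rfl⟩
  fin_cases x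
  · exact hratio
  · exact le_rfl

end CIT

theorem nine_mul_logb_three_lt_seven_mul_logb_seven : 9 * logb 2 3 < 7 * logb 2 7 := by
  have h := logb_lt_logb (b := 2) one_lt_two (by norm_num : (0 : ℝ) < 3 ^ 9)
    (by norm_num : (3 : ℝ) ^ 9 < 7 ^ 7)
  simpa only [logb_pow, Nat.cast_ofNat] using h

open CIT in
/-- for `P = (1/8, 7/8)`, `Q = (7/8, 1/8)`, `S = (9/16, 7/16)`
one has `D(P‖Q) > D_max(P‖S) + D(S‖Q)`. -/
theorem relEnt_dMax_triangle_violation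
    (P Q S : Fin 2 → ℝ)
    (hP : P = ![1 / 8, 7 / 8]) (hQ : Q = ![7 / 8, 1 / 8]) (hS : S = ![9 / 16, 7 / 16]) :
    dMax P S + relEnt S Q < relEnt P Q := by
  subst hP hQ hS
  rw [dMax_fin_two_of_div_le (by norm_num) (by norm_num) (by norm_num) (by norm_num),
    relEnt_fin_two (by norm_num) (by norm_num), relEnt_fin_two (by norm_num) (by norm_num),
    ← EReal.coe_add, EReal.coe_lt_coe_iff]
  rw [show (9 / 16 : ℝ) / (7 / 8) = 3 ^ 2 / (2 * 7) by norm_num,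
    show (7 / 16 : ℝ) / (1 / 8) = 7 / 2 by norm_num,
    show (1 / 8 : ℝ) / (7 / 8) = 7⁻¹ by norm_num,
    show (7 / 8 : ℝ) / (1 / 8) = 7 by norm_num, show (7 / 8 : ℝ) / (7 / 16) = 2 by norm_num,
    logb_div (by norm_num) (by norm_num), logb_div (by norm_num) (by norm_num),
    logb_mul (by norm_num) (by norm_num), logb_pow, logb_inv, logb_self_eq_one one_lt_two]
  linarith [nine_mul_logb_three_lt_seven_mul_logb_seven]
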